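/- The lambda function takes the following special values: λ(i) = 1/2, λ((1+i)/2) = 2, and λ(1+i) = −1. -/

import Mathlib

noncomputable def theta00 (τ : ℂ) : ℂ :=
  ∑' n : ℤ, Complex.exp (Real.pi * Complex.I * (n : ℂ) ^ 2 * τ)

/-- Theta constant `θ01(τ) = ∑_{n∈ℤ} (−1)ⁿ exp(πi n² τ)`. -/
noncomputable def theta01 (τ : ℂ) : ℂ :=
  ∑' n : ℤ, (-1 : ℂ) ^ n * Complex.exp (Real.pi * Complex.I * (n : ℂ) ^ 2 * τ)

/-- Theta constant `θ10(τ) = ∑_{n∈ℤ} exp(πi (n+1/2)² τ)`. -/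
noncomputable def theta10 (τ : ℂ) : ℂ :=
  ∑' n : ℤ, Complex.exp (Real.pi * Complex.I * ((n : ℂ) + 1/2) ^ 2 * τ)

/-- The lambda function `λ(τ) = θ10(τ)⁴ / θ00(τ)⁴`. -/
noncomputable def lambdaFn (τ : ℂ) : ℂ := theta10 τ ^ 4 / theta00 τ ^ 4

/-!
The function λ obeys two transformation laws: λ(−1/τ) = 1 − λ(τ), from the theta inversion
formula together with Jacobi's identity θ00⁴ = θ01⁴ + θ10⁴, and λ(τ + 1) = λ(τ)/(λ(τ) − 1).
Jacobi's identity follows from the duplication formulas θ00(τ)² = θ00(2τ)² + θ10(2τ)²,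
θ01(τ)² = θ00(2τ)² − θ10(2τ)², θ10(τ)² = 2θ00(2τ)θ10(2τ), obtained by sorting the pairs
(m, n) ∈ ℤ² in θ(τ)² by the parity of m + n.

As i = −1/i, the first law gives λ(i) = 1/2, and then the second gives λ(1 + i) = −1 and
λ(−1 + i) = −1. Finally −1/(−1 + i) = (1 + i)/2, so λ((1 + i)/2) = 1 − λ(−1 + i) = 2.
The laws need θ00 ≠ 0, which holds for Im τ ≥ 1 since ‖θ00(τ) − 1‖ ≤ 2q/(1 − q) with
q = e^{−π Im τ} < 1/3.
-/

open Complex Real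

def evenOddSplitEquiv : (ℤ × ℤ) ⊕ (ℤ × ℤ) ≃ ℤ × ℤ where
  toFun := Sum.elim (fun q => (q.1 + q.2, q.1 - q.2)) (fun q => (q.1 + q.2 + 1, q.1 - q.2))
  invFun p :=
    if (p.1 + p.2) % 2 = 0 then .inl ((p.1 + p.2) / 2, (p.1 - p.2) / 2)
    else .inr ((p.1 + p.2) / 2, (p.1 - p.2) / 2)
  left_inv := by
    rintro (⟨a, b⟩ | ⟨a, b⟩) <;> dsimp only [Sum.elim_inl, Sum.elim_inr] <;> split_ifs <;>
      first | (exfalso; omega) | (simp only [Sum.inl.injEq, Sum.inr.injEq, Prod.mk.injEq]; omega)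
  right_inv := by
    rintro ⟨m, n⟩
    dsimp only
    split_ifs <;> simp only [Sum.elim_inl, Sum.elim_inr, Prod.mk.injEq] <;> omega

theorem tsum_int_prod_eq_even_add_odd {E : Type*} [NormedAddCommGroup E] [CompleteSpace E]
    {h : ℤ × ℤ → E} (hh : Summable h) :
    ∑' p, h p =
      ∑' q : ℤ × ℤ, h (q.1 + q.2, q.1 - q.2) + ∑' q : ℤ × ℤ, h (q.1 + q.2 + 1, q.1 - q.2) := by
  have he : Summable fun c => h (evenOddSplitEquiv c) := evenOddSplitEquiv.summable_iff.mpr hh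
  rw [← evenOddSplitEquiv.tsum_eq, Summable.tsum_sum (he.comp_injective Sum.inl_injective)
    (he.comp_injective Sum.inr_injective)]
  rfl

theorem tsum_mul_tsum_int_eq_even_add_odd {R : Type*} [NormedRing R] [CompleteSpace R]
    {f g : ℤ → R} (hf : Summable fun n => ‖f n‖) (hg : Summable fun n => ‖g n‖) :
    (∑' n, f n) * (∑' n, g n) = ∑' q : ℤ × ℤ, f (q.1 + q.2) * g (q.1 - q.2) +
      ∑' q : ℤ × ℤ, f (q.1 + q.2 + 1) * g (q.1 - q.2) := by
  rw [tsum_mul_tsum_of_summable_norm hf hg]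
  exact tsum_int_prod_eq_even_add_odd (h := fun p => f p.1 * g p.2)
    (summable_mul_of_summable_norm hf hg)

theorem summable_norm_cexp_pi_mul_I_sq (c : ℂ) {τ : ℂ} (hτ : 0 < τ.im) :
    Summable fun n : ℤ => ‖cexp (π * I * (n + c) ^ 2 * τ)‖ := by
  have hs : Summable fun n : ℤ => ‖jacobiTheta₂_term n (c * τ) τ‖ :=
    summable_norm_iff.mpr ((summable_jacobiTheta₂_term_iff (c * τ) τ).mpr hτ)
  refine (hs.mul_left ‖cexp (π * I * c ^ 2 * τ)‖).congr fun n => ?_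
  rw [jacobiTheta₂_term, ← norm_mul, ← Complex.exp_add]
  congr 2
  ring

theorem cexp_mul_cexp_of_add_eq {x y u v : ℂ} (h : x + y = u + v) :
    cexp x * cexp y = cexp u * cexp v := by
  rw [← Complex.exp_add, ← Complex.exp_add, h]

section Duplication

variable {τ : ℂ}

theorem summable_norm_theta00_term (hτ : 0 < τ.im) :
    Summable fun n : ℤ => ‖cexp (π * I * n ^ 2 * τ)‖ := by
  simpa using summable_norm_cexp_pi_mul_I_sq 0 hτ

theorem summable_norm_theta01_term (hτ : 0 < τ.im) :
    Summable fun n : ℤ => ‖(-1 : ℂ) ^ n * cexp (π * I * n ^ 2 * τ)‖ := by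
  simpa using summable_norm_theta00_term hτ

theorem summable_norm_theta10_term (hτ : 0 < τ.im) :
    Summable fun n : ℤ => ‖cexp (π * I * (n + 1 / 2) ^ 2 * τ)‖ :=
  summable_norm_cexp_pi_mul_I_sq (1 / 2) hτ

theorem theta00_sq (hτ : 0 < τ.im) :
    theta00 τ ^ 2 = theta00 (2 * τ) ^ 2 + theta10 (2 * τ) ^ 2 := by
  have h2τ : 0 < (2 * τ).im := by simpa using hτ
  simp only [sq]
  simp only [theta00, theta10]
  rw [tsum_mul_tsum_int_eq_even_add_odd (summable_norm_theta00_term hτ)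
      (summable_norm_theta00_term hτ),
    tsum_mul_tsum_of_summable_norm (summable_norm_theta00_term h2τ)
      (summable_norm_theta00_term h2τ),
    tsum_mul_tsum_of_summable_norm (summable_norm_theta10_term h2τ)
      (summable_norm_theta10_term h2τ)]
  congr 1 <;> refine tsum_congr fun q => cexp_mul_cexp_of_add_eq ?_ <;> push_cast <;> ring

theorem theta01_sq (hτ : 0 < τ.im) :
    theta01 τ ^ 2 = theta00 (2 * τ) ^ 2 - theta10 (2 * τ) ^ 2 := by
  have h2τ : 0 < (2 * τ).im := by simpa using hτ
  simp only [sq]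
  simp only [theta00, theta01, theta10]
  rw [tsum_mul_tsum_int_eq_even_add_odd (summable_norm_theta01_term hτ)
      (summable_norm_theta01_term hτ),
    tsum_mul_tsum_of_summable_norm (summable_norm_theta00_term h2τ)
      (summable_norm_theta00_term h2τ),
    tsum_mul_tsum_of_summable_norm (summable_norm_theta10_term h2τ)
      (summable_norm_theta10_term h2τ), sub_eq_add_neg, ← tsum_neg]
  congr 1 <;> refine tsum_congr fun q => ?_ <;>
    rw [mul_mul_mul_comm, ← zpow_add₀ (neg_ne_zero.mpr one_ne_zero)]
  · rw [Even.neg_one_zpow ⟨q.1, by ring⟩, one_mul]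
    exact cexp_mul_cexp_of_add_eq (by push_cast; ring)
  · rw [Odd.neg_one_zpow ⟨q.1, by ring⟩, neg_one_mul, neg_inj]
    exact cexp_mul_cexp_of_add_eq (by push_cast; ring)

theorem theta10_sq (hτ : 0 < τ.im) :
    theta10 τ ^ 2 = 2 * theta00 (2 * τ) * theta10 (2 * τ) := by
  have h2τ : 0 < (2 * τ).im := by simpa using hτ
  have hshift : ∑' n : ℤ, cexp (π * I * (n + 1) ^ 2 * (2 * τ)) = theta00 (2 * τ) := by
    rw [theta00,
      ← (Equiv.addRight (1 : ℤ)).tsum_eq fun n : ℤ => cexp (π * I * n ^ 2 * (2 * τ))]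
    simp
  have hsplit : theta10 τ ^ 2 = theta10 (2 * τ) * theta00 (2 * τ) +
      (∑' n : ℤ, cexp (π * I * (n + 1) ^ 2 * (2 * τ))) * theta10 (2 * τ) := by
    rw [sq]
    simp only [theta00, theta10]
    rw [tsum_mul_tsum_int_eq_even_add_odd (summable_norm_theta10_term hτ)
        (summable_norm_theta10_term hτ),
      tsum_mul_tsum_of_summable_norm (summable_norm_theta10_term h2τ)
        (summable_norm_theta00_term h2τ),
      tsum_mul_tsum_of_summable_norm (summable_norm_cexp_pi_mul_I_sq 1 h2τ)
        (summable_norm_theta10_term h2τ)]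
    congr 1 <;> refine tsum_congr fun q => cexp_mul_cexp_of_add_eq ?_ <;> push_cast <;> ring
  rw [hsplit, hshift]
  ring

theorem theta00_pow_four (hτ : 0 < τ.im) : theta00 τ ^ 4 = theta01 τ ^ 4 + theta10 τ ^ 4 := by
  have h00 := theta00_sq hτ
  have h01 := theta01_sq hτ
  have h10 := theta10_sq hτ
  calc theta00 τ ^ 4 = (theta00 τ ^ 2) ^ 2 := by ring
    _ = (theta01 τ ^ 2) ^ 2 + (theta10 τ ^ 2) ^ 2 := by rw [h00, h01, h10]; ring
    _ = theta01 τ ^ 4 + theta10 τ ^ 4 := by ring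

end Duplication

theorem theta00_eq_jacobiTheta : theta00 = jacobiTheta := rfl

theorem theta01_eq_jacobiTheta₂ (τ : ℂ) : theta01 τ = jacobiTheta₂ (1 / 2) τ := by
  refine tsum_congr fun n => ?_
  rw [jacobiTheta₂_term, show 2 * π * I * n * (1 / 2) + π * I * n ^ 2 * τ
      = n * (π * I) + π * I * n ^ 2 * τ by ring,
    Complex.exp_add, Complex.exp_int_mul, Complex.exp_pi_mul_I]

theorem theta10_eq_cexp_mul_jacobiTheta₂ (τ : ℂ) :
    theta10 τ = cexp (π * I * τ / 4) * jacobiTheta₂ (τ / 2) τ := by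
  rw [jacobiTheta₂, ← tsum_mul_left]
  refine tsum_congr fun n => ?_
  rw [jacobiTheta₂_term, ← Complex.exp_add]
  congr 1
  ring

theorem theta00_neg_inv (τ : ℂ) :
    theta00 τ = 1 / (-I * τ) ^ (1 / 2 : ℂ) * theta00 (-1 / τ) := by
  simpa [theta00_eq_jacobiTheta, jacobiTheta_eq_jacobiTheta₂] using
    jacobiTheta₂_functional_equation 0 τ

theorem theta01_neg_inv (τ : ℂ) :
    theta01 τ = 1 / (-I * τ) ^ (1 / 2 : ℂ) * theta10 (-1 / τ) := by
  rw [theta01_eq_jacobiTheta₂, jacobiTheta₂_functional_equation,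
    theta10_eq_cexp_mul_jacobiTheta₂, show -1 / τ / 2 = -(1 / 2 / τ) by ring, jacobiTheta₂_neg_left,
    show -π * I * (1 / 2) ^ 2 / τ = π * I * (-1 / τ) / 4 by ring, mul_assoc]

theorem cexp_pi_mul_I_mul_int_sq (n : ℤ) : cexp (π * I * n ^ 2) = (-1) ^ n := by
  rw [show π * I * n ^ 2 = (n ^ 2 : ℤ) * (π * I) by push_cast; ring, Complex.exp_int_mul,
    Complex.exp_pi_mul_I]
  rcases Int.even_or_odd n with hn | hn
  · rw [hn.neg_one_zpow, (Int.even_pow.mpr ⟨hn, two_ne_zero⟩).neg_one_zpow]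
  · rw [hn.neg_one_zpow, hn.pow.neg_one_zpow]

theorem theta00_add_one (τ : ℂ) : theta00 (τ + 1) = theta01 τ := by
  refine tsum_congr fun n => ?_
  rw [mul_add, mul_one, Complex.exp_add, cexp_pi_mul_I_mul_int_sq, mul_comm]

theorem theta10_add_one (τ : ℂ) : theta10 (τ + 1) = cexp (π * I / 4) * theta10 τ := by
  rw [theta10, theta10, ← tsum_mul_left]
  refine tsum_congr fun n => ?_
  rw [show π * I * (n + 1 / 2) ^ 2 * (τ + 1)
      = (n * (n + 1) : ℤ) * (π * I) + (π * I / 4 + π * I * (n + 1 / 2) ^ 2 * τ) by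
        push_cast; ring,
    Complex.exp_add, Complex.exp_int_mul, Complex.exp_pi_mul_I,
    (Int.even_mul_succ_self n).neg_one_zpow, one_mul, Complex.exp_add]

theorem theta00_ne_zero {τ : ℂ} (hτ : 1 ≤ τ.im) : theta00 τ ≠ 0 := by
  set q := rexp (-π * τ.im)
  have hq : q < 1 / 3 := by
    have h3 : 3 < rexp (π * τ.im) := by
      nlinarith [Real.add_one_le_exp (π * τ.im), Real.pi_gt_three]
    rw [show q = (rexp (π * τ.im))⁻¹ by simp only [q, neg_mul, Real.exp_neg], one_div]
    exact inv_strictAnti₀ (by norm_num) h3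
  have hbound := norm_jacobiTheta_sub_one_le (τ := τ) (by linarith)
  have hlt : 2 / (1 - q) * q < 1 := by
    rw [div_mul_eq_mul_div, div_lt_one (by linarith)]
    linarith
  intro h0
  rw [← theta00_eq_jacobiTheta, h0, zero_sub, norm_neg, norm_one] at hbound
  linarith

theorem lambdaFn_neg_inv {τ : ℂ} (hτ : 0 < τ.im) (h0 : theta00 τ ≠ 0) :
    lambdaFn (-1 / τ) = 1 - lambdaFn τ := by
  obtain ⟨k, h00, h01⟩ : ∃ k, theta00 τ = k * theta00 (-1 / τ) ∧
      theta01 τ = k * theta10 (-1 / τ) := ⟨_, theta00_neg_inv τ, theta01_neg_inv τ⟩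
  have hJ := theta00_pow_four hτ
  rw [h00, h01] at hJ
  rw [h00] at h0
  have hk : k ≠ 0 := left_ne_zero_of_mul h0
  have ha : theta00 (-1 / τ) ≠ 0 := right_ne_zero_of_mul h0
  rw [lambdaFn, lambdaFn, h00]
  generalize -1 / τ = σ at *
  field_simp
  linear_combination -hJ

theorem lambdaFn_add_one {τ : ℂ} (hτ : 0 < τ.im) (h0 : theta00 τ ≠ 0) :
    lambdaFn (τ + 1) = lambdaFn τ / (lambdaFn τ - 1) := by
  have hsub : lambdaFn τ - 1 = -(theta01 τ ^ 4 / theta00 τ ^ 4) := by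
    rw [lambdaFn]
    field_simp
    linear_combination -theta00_pow_four hτ
  have hζ : cexp (π * I / 4) ^ 4 = -1 := by
    rw [← Complex.exp_nat_mul, show ((4 : ℕ) : ℂ) * (π * I / 4) = π * I by push_cast; ring,
      Complex.exp_pi_mul_I]
  rw [hsub, lambdaFn, lambdaFn, theta10_add_one, theta00_add_one, mul_pow, hζ, div_neg,
    div_div_div_cancel_right₀ (pow_ne_zero 4 h0), neg_one_mul, neg_div]

/-- Special values of the lambda function at midpoints of Schwarz's triangle. -/
theorem lambda_special_values :
    lambdaFn Complex.I = 1/2 ∧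
    lambdaFn ((1 + Complex.I) / 2) = 2 ∧
    lambdaFn (1 + Complex.I) = -1 := by
  have hI : 0 < I.im := by simp
  have hI' : 0 < (-1 + I).im := by simp
  have h0I : theta00 I ≠ 0 := theta00_ne_zero (by simp)
  have h0I' : theta00 (-1 + I) ≠ 0 := theta00_ne_zero (by simp)
  have hlam_I : lambdaFn I = 1 / 2 := by
    have h := lambdaFn_neg_inv hI h0I
    rw [show -1 / I = I by field_simp; simp] at h
    linear_combination h / 2
  have hlam_neg_one_add_I : lambdaFn (-1 + I) = -1 := by
    have h := lambdaFn_add_one hI' h0I'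
    rw [show -1 + I + 1 = I by ring, hlam_I] at h
    -- `x / 0 = 0` in Lean, so `x / (x - 1) = 1 / 2` rules out `x = 1`
    have hne : lambdaFn (-1 + I) - 1 ≠ 0 := fun h1 => by simp [h1] at h
    field_simp at h
    linear_combination -h
  refine ⟨hlam_I, ?_, ?_⟩
  · have h := lambdaFn_neg_inv hI' h0I'
    rw [show -1 / (-1 + I) = (1 + I) / 2 by
      rw [div_eq_div_iff (by simp [Complex.ext_iff]) two_ne_zero]
      linear_combination -I_sq, hlam_neg_one_add_I] at h
    rw [h]
    norm_num
  · rw [add_comm, lambdaFn_add_one hI h0I, hlam_I]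
    norm_num
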